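/- Let h₁ > h₂ > 0 and P > 0. For every point (r₁, r₂) on the boundary curve P₁ ↦ (γ(h₁²P₁), γ(h₂²P) − γ(h₂²P₁)) with P₁ ∈ (0,P), the full region {(r₁', r₂') : r₁' = γ(h₁²Q), r₂' ≤ γ(h₂²P) − γ(h₂²Q), Q ∈ [0,P]} lies weakly below the tangent line at (r₁, r₂): a·r₁' + b·r₂' ≤ 1 for all points in the region, where a, b are as given by the tangent formula. In other words, the Gaussian BC capacity region is convex and supported by these tangent lines. -/

import Mathlib

noncomputable def gam (x : ℝ) : ℝ := (1/2) * Real.logb 2 (1 + x)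

/-! Writing `γ(h²t) = (log h² + log (1/h² + t)) / (2 log 2)`, the supporting inequality
reduces to `g·(γ(h₁²Q) − γ(h₁²P₁)) ≤ γ(h₂²Q) − γ(h₂²P₁)`, which after this substitution is
`A/B · log((A+s)/A) ≤ log((B+s)/B)` for the effective noise levels `A = 1/h₁² + P₁ ≤ B = 1/h₂² + P₁`
and `s = Q − P₁`: an instance of the concavity of `log`. -/

open Real

theorem div_mul_log_sub_log_le_log_sub_log {A B s : ℝ} (hA : 0 < A) (hAB : A ≤ B)
    (hAs : 0 < A + s) :
    A / B * (log (A + s) - log A) ≤ log (B + s) - log B := by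
  have hB : 0 < B := hA.trans_le hAB
  -- `(B + s) / B` is the convex combination `A/B • (A + s)/A + (1 - A/B) • 1`.
  have hconc := strictConcaveOn_log_Ioi.concaveOn.2 (Set.mem_Ioi.2 (div_pos hAs hA))
    (Set.mem_Ioi.2 one_pos) (div_nonneg hA.le hB.le) (sub_nonneg.2 ((div_le_one hB).2 hAB))
    (add_sub_cancel _ _)
  have hcomb : A / B * ((A + s) / A) + (1 - A / B) * 1 = (B + s) / B := by
    field_simp
    ring
  simp only [smul_eq_mul, log_one, mul_zero, add_zero, hcomb] at hconc
  rwa [← log_div hAs.ne' hA.ne', ← log_div (by linarith) hB.ne']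

theorem gam_sq_mul {h : ℝ} (hh : h ≠ 0) {t : ℝ} (ht : 0 ≤ t) :
    gam (h ^ 2 * t) = (log (h ^ 2) + log (1 / h ^ 2 + t)) / (2 * log 2) := by
  have hh2 : 0 < h ^ 2 := by positivity
  rw [gam, logb, show 1 + h ^ 2 * t = h ^ 2 * (1 / h ^ 2 + t) by field_simp,
    log_mul hh2.ne' (by positivity)]
  ring

theorem gam_pos {x : ℝ} (hx : 0 < x) : 0 < gam x :=
  mul_pos one_half_pos (logb_pos one_lt_two (by linarith))

theorem gam_le_gam {x y : ℝ} (hx : 0 ≤ x) (hxy : x ≤ y) : gam x ≤ gam y := by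
  unfold gam
  gcongr
  norm_num

theorem mul_gam_sub_le_gam_sub {h₁ h₂ : ℝ} (hh₂ : 0 < h₂) (hh : h₂ ≤ h₁) {P₁ Q : ℝ}
    (hP₁ : 0 ≤ P₁) (hQ : 0 ≤ Q) :
    (1 / h₁ ^ 2 + P₁) / (1 / h₂ ^ 2 + P₁) * (gam (h₁ ^ 2 * Q) - gam (h₁ ^ 2 * P₁)) ≤
      gam (h₂ ^ 2 * Q) - gam (h₂ ^ 2 * P₁) := by
  have hh₁ : 0 < h₁ := hh₂.trans_le hh
  have hnoise : 1 / h₁ ^ 2 ≤ 1 / h₂ ^ 2 := by gcongr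
  have hlog := div_mul_log_sub_log_le_log_sub_log (A := 1 / h₁ ^ 2 + P₁) (B := 1 / h₂ ^ 2 + P₁)
    (s := Q - P₁) (by positivity) (by linarith) (by rw [add_add_sub_cancel]; positivity)
  simp only [add_add_sub_cancel] at hlog
  rw [gam_sq_mul hh₁.ne' hQ, gam_sq_mul hh₁.ne' hP₁, gam_sq_mul hh₂.ne' hQ,
    gam_sq_mul hh₂.ne' hP₁, ← sub_div, ← sub_div, add_sub_add_left_eq_sub,
    add_sub_add_left_eq_sub, ← mul_div_assoc]
  gcongr

theorem tangent_line_supports_capacity_region_general (h₁ h₂ P : ℝ)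
    (hh₂ : 0 < h₂) (hh : h₂ < h₁) :
    ∀ P₁ ∈ Set.Ioo (0 : ℝ) P,
      let r₁ := gam (h₁^2 * P₁)
      let r₂ := gam (h₂^2 * P) - gam (h₂^2 * P₁)
      let g := (1 / h₁^2 + P₁) / (1 / h₂^2 + P₁)
      let a := g / (r₂ + g * r₁)
      let b := 1 / (r₂ + g * r₁)
      ∀ Q ∈ Set.Icc (0 : ℝ) P, ∀ r₂' : ℝ,
        0 ≤ r₂' → r₂' ≤ gam (h₂^2 * P) - gam (h₂^2 * Q) →
        a * gam (h₁^2 * Q) + b * r₂' ≤ 1 := by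
  intro P₁ ⟨hP₁0, hP₁P⟩ r₁ r₂ g a b Q ⟨hQ0, _⟩ r₂' _ hr₂'
  have hh₁ : 0 < h₁ := hh₂.trans hh
  have hg : 0 < g := by positivity
  have hr₁ : 0 < r₁ := gam_pos (by positivity)
  have hr₂ : 0 ≤ r₂ := sub_nonneg.2 (gam_le_gam (by positivity) (by gcongr))
  have hD : 0 < r₂ + g * r₁ := by positivity
  have hmain := mul_gam_sub_le_gam_sub hh₂ hh.le hP₁0.le hQ0
  calc a * gam (h₁ ^ 2 * Q) + b * r₂' = (g * gam (h₁ ^ 2 * Q) + r₂') / (r₂ + g * r₁) := by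
        simp only [a, b]
        ring
    _ ≤ 1 := (div_le_one hD).2 (by linarith)

theorem tangent_line_supports_capacity_region (h₁ h₂ P : ℝ)
    (hh₂ : 0 < h₂) (hh : h₂ < h₁) (hP : 0 < P) :
    ∀ P₁ ∈ Set.Ioo (0 : ℝ) P,
      let r₁ := gam (h₁^2 * P₁)
      let r₂ := gam (h₂^2 * P) - gam (h₂^2 * P₁)
      let g := (1 / h₁^2 + P₁) / (1 / h₂^2 + P₁)
      let a := g / (r₂ + g * r₁)
      let b := 1 / (r₂ + g * r₁)
      ∀ Q ∈ Set.Icc (0 : ℝ) P, ∀ r₂' : ℝ,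
        0 ≤ r₂' → r₂' ≤ gam (h₂^2 * P) - gam (h₂^2 * Q) →
        a * gam (h₁^2 * Q) + b * r₂' ≤ 1 :=
  tangent_line_supports_capacity_region_general h₁ h₂ P hh₂ hh
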